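/- Let $p$ be a prime, let $k = \mathbb{F}_p(t,u)$ be the field of rational functions in two variables $t, u$ over the prime field $\mathbb{F}_p$, and let $A = k[X,Y]/(Y^p - t - X - uX^p)$. Then $A$ is not isomorphic to the polynomial ring $k[T]$ as a $k$-algebra. -/

import Mathlib

open TensorProduct MvPolynomial

/-- The field `k = 𝔽_p(t,u)` of rational functions in two variables `t = X 0`, `u = X 1`
over the prime field `𝔽_p = ZMod p`, realized as the fraction field of the polynomial
ring `𝔽_p[t,u]`. -/
def RatFunc2 (p : ℕ) [Fact p.Prime] : Type :=
  FractionRing (MvPolynomial (Fin 2) (ZMod p))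

noncomputable instance (p : ℕ) [Fact p.Prime] : Field (RatFunc2 p) :=
  inferInstanceAs (Field (FractionRing (MvPolynomial (Fin 2) (ZMod p))))

noncomputable instance (p : ℕ) [Fact p.Prime] :
    Algebra (MvPolynomial (Fin 2) (ZMod p)) (RatFunc2 p) :=
  inferInstanceAs
    (Algebra (MvPolynomial (Fin 2) (ZMod p)) (FractionRing (MvPolynomial (Fin 2) (ZMod p))))

/-- `k = 𝔽_p(t,u)` is indeed the field of fractions of `𝔽_p[t,u]`. -/
instance (p : ℕ) [Fact p.Prime] :
    IsFractionRing (MvPolynomial (Fin 2) (ZMod p)) (RatFunc2 p) :=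
  inferInstanceAs (IsFractionRing (MvPolynomial (Fin 2) (ZMod p))
    (FractionRing (MvPolynomial (Fin 2) (ZMod p))))

/-- The element `t` of `𝔽_p(t,u)`. -/
noncomputable abbrev tVar (p : ℕ) [Fact p.Prime] : RatFunc2 p :=
  algebraMap (MvPolynomial (Fin 2) (ZMod p)) (RatFunc2 p) (X 0)

/-- The element `u` of `𝔽_p(t,u)`. -/
noncomputable abbrev uVar (p : ℕ) [Fact p.Prime] : RatFunc2 p :=
  algebraMap (MvPolynomial (Fin 2) (ZMod p)) (RatFunc2 p) (X 1)

/-- The `k`-algebra `A = k[X,Y]/(Y^p - t - X - u·X^p)` over `k = 𝔽_p(t,u)`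
(with `X = X 0`, `Y = X 1`). -/
noncomputable abbrev AsanumaExample (p : ℕ) [Fact p.Prime] :=
  MvPolynomial (Fin 2) (RatFunc2 p) ⧸
    Ideal.span {(X 1 : MvPolynomial (Fin 2) (RatFunc2 p)) ^ p
      - C (tVar p) - X 0 - C (uVar p) * (X 0) ^ p}

/-!
A `k`-algebra isomorphism `A ≃ k[T]` followed by `T ↦ 0` would give a `k`-rational point
`(x, y)` on `y^p = t + x + u x^p`. Write `x = a/c`, `y = b/c` with `a, b, c ∈ 𝔽_p[t,u]`, so that
`b^p = t c^p + a c^(p-1) + u a^p`. Since `∂_t` and `∂_u` kill `p`-th powers, differentiating gives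
`c^2 = a ∂_t c - c ∂_t a` and `a^p = c^(p-2) (a ∂_u c - c ∂_u a)`. A Wronskian
`f ∂g - g ∂f ≠ 0` has total degree `< deg f + deg g`, so the first identity forces
`deg c < deg a` and the second `deg a < deg c`.
-/

namespace MvPolynomial

variable {R σ : Type*}

theorem totalDegree_pderiv_lt [CommSemiring R] {i : σ} {f : MvPolynomial σ R}
    (h : pderiv i f ≠ 0) : (pderiv i f).totalDegree < f.totalDegree := by
  obtain ⟨m, hm, hdeg⟩ :=
    Finset.exists_mem_eq_sup _ (support_nonempty.mpr h) fun m : σ →₀ ℕ => m.sum fun _ e => e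
  have hm' : m + Finsupp.single i 1 ∈ f.support := by
    rw [mem_support_iff, coeff_pderiv] at hm
    exact mem_support_iff.mpr (left_ne_zero_of_mul hm)
  calc (pderiv i f).totalDegree = m.sum fun _ e => e := hdeg
    _ < (m + Finsupp.single i 1).sum fun _ e => e := by
      rw [Finsupp.sum_add_index' (fun _ => rfl) fun _ _ _ => rfl]; simp
    _ ≤ f.totalDegree := le_totalDegree hm'

theorem totalDegree_mul_pderiv_lt [CommSemiring R] {i : σ} (f : MvPolynomial σ R)
    {g : MvPolynomial σ R} (hg : pderiv i g ≠ 0) :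
    (f * pderiv i g).totalDegree < f.totalDegree + g.totalDegree :=
  (totalDegree_mul _ _).trans_lt (Nat.add_lt_add_left (totalDegree_pderiv_lt hg) _)

theorem totalDegree_wronskian_lt [CommRing R] {i : σ} {f g : MvPolynomial σ R}
    (h : f * pderiv i g - pderiv i f * g ≠ 0) :
    (f * pderiv i g - pderiv i f * g).totalDegree < f.totalDegree + g.totalDegree := by
  by_cases hg : pderiv i g = 0
  · have hf : pderiv i f ≠ 0 := by rintro hf; simp [hf, hg] at h
    rw [hg, mul_zero, zero_sub, totalDegree_neg, mul_comm, add_comm]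
    exact totalDegree_mul_pderiv_lt g hf
  by_cases hf : pderiv i f = 0
  · rw [hf, zero_mul, sub_zero]
    exact totalDegree_mul_pderiv_lt f hg
  refine (totalDegree_sub _ _).trans_lt (max_lt (totalDegree_mul_pderiv_lt f hg) ?_)
  rw [mul_comm, add_comm]
  exact totalDegree_mul_pderiv_lt g hf

theorem pderiv_pow_char [CommRing R] (p : ℕ) [CharP R p] (i : σ) (f : MvPolynomial σ R) :
    pderiv i (f ^ p) = 0 := by
  rw [pderiv_pow, CharP.cast_eq_zero, zero_mul, zero_mul]

section IsDomain

variable [CommRing R] [IsDomain R]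

theorem totalDegree_pow_of_isDomain (f : MvPolynomial σ R) (n : ℕ) :
    (f ^ n).totalDegree = n * f.totalDegree := by
  rcases eq_or_ne f 0 with rfl | hf
  · cases n <;> simp
  induction n with
  | zero => simp
  | succ n ih => rw [pow_succ, totalDegree_mul_of_isDomain (pow_ne_zero n hf) hf, ih]; ring

section Wronskian

variable {i : σ} {a c : MvPolynomial σ R}

theorem totalDegree_lt_of_sq_eq_wronskian (hc : c ≠ 0)
    (h : c ^ 2 = a * pderiv i c - pderiv i a * c) : c.totalDegree < a.totalDegree := by
  have hw : a * pderiv i c - pderiv i a * c ≠ 0 := h ▸ pow_ne_zero 2 hc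
  have := totalDegree_wronskian_lt hw
  rw [← h, totalDegree_pow_of_isDomain] at this
  omega

theorem totalDegree_lt_of_pow_eq_mul_wronskian {n : ℕ} (ha : a ≠ 0)
    (h : a ^ (n + 2) = c ^ n * (a * pderiv i c - pderiv i a * c)) :
    a.totalDegree < c.totalDegree := by
  have hw : a * pderiv i c - pderiv i a * c ≠ 0 := right_ne_zero_of_mul (h ▸ pow_ne_zero _ ha)
  have hc : c ≠ 0 := by rintro rfl; simp at hw
  have := totalDegree_wronskian_lt hw
  have hdeg := congrArg totalDegree h
  rw [totalDegree_pow_of_isDomain, totalDegree_mul_of_isDomain (pow_ne_zero n hc) hw,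
    totalDegree_pow_of_isDomain] at hdeg
  nlinarith

end Wronskian

variable {p : ℕ} [Fact p.Prime] [CharP R p]

theorem pow_ne_X_mul_pow_add_mul_pow_add_X_mul_pow {a b c : MvPolynomial (Fin 2) R} (hc : c ≠ 0) :
    b ^ p ≠ X 0 * c ^ p + a * c ^ (p - 1) + X 1 * a ^ p := by
  obtain ⟨n, rfl⟩ : ∃ n, p = n + 2 := ⟨p - 2, by have := (Fact.out : p.Prime).two_le; omega⟩
  intro h
  rw [show n + 2 - 1 = n + 1 by omega] at h
  have hn : ((n + 1 : ℕ) : MvPolynomial (Fin 2) R) = -1 := by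
    have := CharP.cast_eq_zero (MvPolynomial (Fin 2) R) (n + 2)
    push_cast at this ⊢
    linear_combination this
  have h0 := congrArg (pderiv 0) h
  have h1 := congrArg (pderiv 1) h
  simp only [map_add, pderiv_mul, pderiv_pow_char, pderiv_pow, pderiv_X_self,
    pderiv_X_of_ne (show (1 : Fin 2) ≠ 0 by decide), pderiv_X_of_ne (show (0 : Fin 2) ≠ 1 by decide),
    Nat.add_sub_cancel, hn] at h0 h1
  have E0 : c ^ n * (c ^ 2 - (a * pderiv 0 c - pderiv 0 a * c)) = 0 := by
    linear_combination -h0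
  replace E0 : c ^ 2 = a * pderiv 0 c - pderiv 0 a * c :=
    sub_eq_zero.mp ((mul_eq_zero.mp E0).resolve_left (pow_ne_zero n hc))
  have E1 : a ^ (n + 2) = c ^ n * (a * pderiv 1 c - pderiv 1 a * c) := by
    linear_combination -h1
  have ha : a ≠ 0 := by rintro rfl; simp [hc] at E0
  exact (totalDegree_lt_of_sq_eq_wronskian hc E0).asymm
    (totalDegree_lt_of_pow_eq_mul_wronskian ha E1)

theorem pow_ne_algebraMap_X_add_add_algebraMap_X_mul_pow {K : Type*} [Field K]
    [Algebra (MvPolynomial (Fin 2) R) K] [IsFractionRing (MvPolynomial (Fin 2) R) K] (x y : K) :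
    y ^ p ≠ algebraMap (MvPolynomial (Fin 2) R) K (X 0) + x
      + algebraMap (MvPolynomial (Fin 2) R) K (X 1) * x ^ p := by
  obtain ⟨a, c, hc, rfl⟩ := IsFractionRing.div_surjective (A := MvPolynomial (Fin 2) R) x
  obtain ⟨b, d, hd, rfl⟩ := IsFractionRing.div_surjective (A := MvPolynomial (Fin 2) R) y
  have hcd : c * d ≠ 0 := mul_ne_zero (nonZeroDivisors.ne_zero hc) (nonZeroDivisors.ne_zero hd)
  have hc' := IsFractionRing.to_map_ne_zero_of_mem_nonZeroDivisors (K := K) hc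
  have hd' := IsFractionRing.to_map_ne_zero_of_mem_nonZeroDivisors (K := K) hd
  intro h
  obtain ⟨n, rfl⟩ : ∃ n, p = n + 1 := ⟨p - 1, by have := (Fact.out : p.Prime).one_lt; omega⟩
  refine pow_ne_X_mul_pow_add_mul_pow_add_X_mul_pow (p := n + 1) (a := a * d) (b := b * c) hcd
    (IsFractionRing.injective _ K ?_)
  simp only [map_add, map_mul, map_pow, Nat.add_sub_cancel]
  calc _ = (algebraMap _ K b / algebraMap _ K d) ^ (n + 1)
        * (algebraMap _ K c * algebraMap _ K d) ^ (n + 1) := by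
        rw [← mul_pow]; congr 1; field_simp
    _ = _ := by rw [h, div_pow]; field_simp; ring

end IsDomain

theorem aeval_eq_zero_of_quotient_span_singleton [CommRing R] {S : Type*} [CommRing S]
    [Algebra R S] {f : MvPolynomial σ R} (φ : MvPolynomial σ R ⧸ Ideal.span {f} →ₐ[R] S) :
    aeval (fun i => φ (Ideal.Quotient.mk _ (X i))) f = 0 := by
  calc aeval (fun i => φ (Ideal.Quotient.mk _ (X i))) f
      = (φ.comp (Ideal.Quotient.mkₐ R _)) f := by rw [aeval_unique (φ.comp _)]; rfl
    _ = 0 := by simp [Ideal.Quotient.mk_singleton_self]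

end MvPolynomial

theorem isEmpty_algHom_asanumaExample (p : ℕ) [Fact p.Prime] :
    IsEmpty (AsanumaExample p →ₐ[RatFunc2 p] RatFunc2 p) := by
  refine ⟨fun φ => pow_ne_algebraMap_X_add_add_algebraMap_X_mul_pow (R := ZMod p)
    (φ (Ideal.Quotient.mk _ (X 0))) (φ (Ideal.Quotient.mk _ (X 1))) ?_⟩
  have h := aeval_eq_zero_of_quotient_span_singleton φ
  simp only [map_sub, map_mul, map_pow, aeval_X, aeval_C, Algebra.algebraMap_self,
    RingHom.id_apply] at h
  linear_combination h

/-- **Example 1, nontriviality.** Let `p` be a prime, `k = 𝔽_p(t,u)` and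
`A = k[X,Y]/(Y^p - t - X - u·X^p)`.  Then `A` is not isomorphic to the polynomial ring
`k[T]` as a `k`-algebra. -/
theorem asanumaExample_not_polynomial_ring (p : ℕ) [Fact p.Prime] :
    IsEmpty (AsanumaExample p ≃ₐ[RatFunc2 p] Polynomial (RatFunc2 p)) :=
  ⟨fun e => (isEmpty_algHom_asanumaExample p).false ((Polynomial.aeval 0).comp e.toAlgHom)⟩
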